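/- Let I, J ⊆ ℝ be disjoint closed intervals with |I| + |J| = 1 and |I| ≠ |J|, with midpoints m₁, m₂, and let A = I ∪ J. If \hat{\chi}_A(1) = 0, then |m₁ − m₂| = k + 1/2 for some positive integer k, and consequently A tiles ℝ with translation set ℤ: ∑_{n∈ℤ} \chi_A(x − n) = 1 for almost every x ∈ ℝ. -/

import Mathlib

/-!
Each interval contributes `e^{-2πi m} sin(πℓ)/π` to `\hat{χ}_A(1)`, and `ℓ₁ + ℓ₂ = 1` makes the two
sine factors equal and positive, so `\hat{χ}_A(1) = 0` forces `e^{-2πi m₁} = -e^{-2πi m₂}`, i.e.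
`m₂ - m₁ ∈ ℤ + 1/2`; disjointness gives `|m₁ - m₂| > 1/2`. Then `A` is, up to endpoints,
`[a, a + ℓ₁) ∪ ([a + ℓ₁, a + 1) + n)` for some integer `n`, which meets every coset `x + ℤ`
exactly once.
-/

open MeasureTheory Real

noncomputable section

/-- The Fourier transform of the indicator function of a set `A ⊆ ℝ`,
`\hat{χ}_A(x) = ∫_A e^{-2πi x t} dt`. -/
def ftInd1 (A : Set ℝ) (x : ℝ) : ℂ :=
  ∫ t in A, Complex.exp (((-(2 * π * x * t) : ℝ) : ℂ) * Complex.I)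

section

open Set Complex

lemma ftInd1_union {A B : Set ℝ} (hAB : Disjoint A B) (hB : MeasurableSet B)
    (hA : volume A ≠ ⊤) (hB' : volume B ≠ ⊤) (x : ℝ) :
    ftInd1 (A ∪ B) x = ftInd1 A x + ftInd1 B x := by
  have hint : ∀ s : Set ℝ, volume s ≠ ⊤ →
      IntegrableOn (fun t : ℝ => exp (((-(2 * π * x * t) : ℝ) : ℂ) * I)) s := fun s hs =>
    Measure.integrableOn_of_bounded hs (by fun_prop : Continuous _).aestronglyMeasurable
      (ae_of_all _ fun t => (norm_exp_ofReal_mul_I _).le)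
  exact setIntegral_union hAB hB (hint A hA) (hint B hB')

lemma ftInd1_Icc_of_ne_zero (m : ℝ) {ℓ x : ℝ} (hℓ : 0 ≤ ℓ) (hx : x ≠ 0) :
    ftInd1 (Icc (m - ℓ / 2) (m + ℓ / 2)) x =
      exp (((-(2 * π * m * x)) : ℝ) * I) * ((Real.sin (π * ℓ * x) / (π * x) : ℝ) : ℂ) := by
  set c : ℂ := ((-(2 * π * x) : ℝ) : ℂ) * I
  have hc : c ≠ 0 := by simp [c, Complex.ext_iff, Real.pi_ne_zero, hx]
  have hintegrand : ∀ t : ℝ, exp (((-(2 * π * x * t) : ℝ) : ℂ) * I) = exp (c * t) := fun t => by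
    congr 1; push_cast [c]; ring
  rw [ftInd1, integral_Icc_eq_integral_Ioc, ← intervalIntegral.integral_of_le (by linarith)]
  simp only [hintegrand]
  rw [integral_exp_mul_complex hc]
  have hb : c * ((m + ℓ / 2 : ℝ) : ℂ)
      = ((-(2 * π * m * x)) : ℝ) * I + -((π * ℓ * x : ℝ) : ℂ) * I := by
    push_cast [c]; ring
  have ha : c * ((m - ℓ / 2 : ℝ) : ℂ)
      = ((-(2 * π * m * x)) : ℝ) * I + ((π * ℓ * x : ℝ) : ℂ) * I := by
    push_cast [c]; ring
  have hsin : exp (-((π * ℓ * x : ℝ) : ℂ) * I) - exp (((π * ℓ * x : ℝ) : ℂ) * I)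
      = -2 * I * ((Real.sin (π * ℓ * x) : ℝ) : ℂ) := by
    rw [exp_mul_I, exp_mul_I, Complex.cos_neg, Complex.sin_neg, ofReal_sin]
    ring
  have hπx : ((π * x : ℝ) : ℂ) ≠ 0 := by exact_mod_cast mul_ne_zero Real.pi_ne_zero hx
  rw [hb, ha, Complex.exp_add, Complex.exp_add, ← mul_sub, hsin, div_eq_iff hc, ofReal_div]
  field_simp
  push_cast [c]
  ring

lemma ftInd1_Icc_union_Icc_one {m₁ m₂ ℓ₁ ℓ₂ : ℝ} (h₁ : 0 ≤ ℓ₁) (h₂ : 0 ≤ ℓ₂)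
    (hsum : ℓ₁ + ℓ₂ = 1)
    (hdisj : Disjoint (Icc (m₁ - ℓ₁ / 2) (m₁ + ℓ₁ / 2)) (Icc (m₂ - ℓ₂ / 2) (m₂ + ℓ₂ / 2))) :
    ftInd1 (Icc (m₁ - ℓ₁ / 2) (m₁ + ℓ₁ / 2) ∪ Icc (m₂ - ℓ₂ / 2) (m₂ + ℓ₂ / 2)) 1 =
      (exp ((-(2 * π * m₁) : ℝ) * I) + exp ((-(2 * π * m₂) : ℝ) * I)) *
        ((Real.sin (π * ℓ₁) / π : ℝ) : ℂ) := by
  have hsin : Real.sin (π * ℓ₂) = Real.sin (π * ℓ₁) := by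
    rw [show π * ℓ₂ = π - π * ℓ₁ by linear_combination π * hsum, Real.sin_pi_sub]
  rw [ftInd1_union hdisj measurableSet_Icc measure_Icc_lt_top.ne measure_Icc_lt_top.ne,
    ftInd1_Icc_of_ne_zero m₁ h₁ one_ne_zero, ftInd1_Icc_of_ne_zero m₂ h₂ one_ne_zero]
  simp only [mul_one, hsin]
  ring

lemma exists_int_sub_eq_add_half_of_exp_add_exp_eq_zero {a b : ℝ}
    (h : exp (((-(2 * π * a)) : ℝ) * I) + exp (((-(2 * π * b)) : ℝ) * I) = 0) :
    ∃ n : ℤ, b - a = n + 1 / 2 := by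
  have hshift : exp (((-(2 * π * a)) : ℝ) * I) = exp (((-(2 * π * b)) : ℝ) * I + π * I) := by
    rw [Complex.exp_add, exp_pi_mul_I]; linear_combination h
  obtain ⟨n, hn⟩ := exp_eq_exp_iff_exists_int.mp hshift
  refine ⟨n, ?_⟩
  have him : -(2 * π * a) = -(2 * π * b) + π + n * (2 * π) := by
    simpa using congrArg Complex.im hn
  have h2π : (2 * π) * (b - a) = (2 * π) * (n + 1 / 2) := by linear_combination him
  exact mul_left_cancel₀ (by positivity) h2π

lemma add_div_two_lt_abs_sub_of_disjoint_Icc {m₁ m₂ ℓ₁ ℓ₂ : ℝ} (h₁ : 0 ≤ ℓ₁) (h₂ : 0 ≤ ℓ₂)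
    (h : Disjoint (Icc (m₁ - ℓ₁ / 2) (m₁ + ℓ₁ / 2)) (Icc (m₂ - ℓ₂ / 2) (m₂ + ℓ₂ / 2))) :
    (ℓ₁ + ℓ₂) / 2 < |m₁ - m₂| := by
  by_contra! hle
  obtain ⟨hle₁, hle₂⟩ := abs_le.mp hle
  refine not_disjoint_iff.mpr ⟨max (m₁ - ℓ₁ / 2) (m₂ - ℓ₂ / 2), ?_, ?_⟩ h
  · exact ⟨le_max_left _ _, max_le (by linarith) (by linarith)⟩
  · exact ⟨le_max_right _ _, max_le (by linarith) (by linarith)⟩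

lemma exists_pos_nat_abs_int_add_half_eq {n : ℤ} (h : 1 / 2 < |(n : ℝ) + 1 / 2|) :
    ∃ k : ℕ, 0 < k ∧ |(n : ℝ) + 1 / 2| = k + 1 / 2 := by
  obtain ⟨j, rfl | rfl⟩ := n.eq_nat_or_neg
  · have habs : |((j : ℤ) : ℝ) + 1 / 2| = j + 1 / 2 := by
      rw [abs_of_pos (by positivity)]; push_cast; ring
    rw [habs] at h ⊢
    exact ⟨j, by exact_mod_cast (by linarith : (0 : ℝ) < j), rfl⟩
  · rcases j with _ | j
    · norm_num at h
    · have habs : |-((j : ℝ) + 1) + 1 / 2| = j + 1 / 2 := by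
        rw [abs_of_neg (by linarith [(j.cast_nonneg : (0 : ℝ) ≤ j)])]; ring
      push_cast at h ⊢
      rw [habs] at h ⊢
      exact ⟨j, by exact_mod_cast (by linarith : (0 : ℝ) < j), rfl⟩

lemma tsum_indicator_comp_eq_of_existsUnique {ι α M : Type*} [AddCommMonoid M]
    [TopologicalSpace M] {f : ι → α} {s : Set α} (h : ∃! i, f i ∈ s) (c : M) :
    ∑' i, s.indicator (fun _ => c) (f i) = c := by
  obtain ⟨i, hi, huniq⟩ := h
  rw [tsum_eq_single i fun j hj => indicator_of_notMem (fun hm => hj (huniq j hm)) _,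
    indicator_of_mem hi]

lemma existsUnique_sub_int_mem_Ico_union_Ico (a x : ℝ) {ℓ : ℝ} (h₀ : 0 ≤ ℓ) (h₁ : ℓ ≤ 1) (k : ℤ) :
    ∃! n : ℤ, x - n ∈ Ico a (a + ℓ) ∪ Ico (a + k + ℓ) (a + k + 1) := by
  obtain ⟨N, hN, huniq⟩ := existsUnique_sub_zsmul_mem_Ico one_pos x a
  simp only [zsmul_one] at hN huniq
  have hfirst : ∀ n : ℤ, x - n ∈ Ico a (a + ℓ) → n = N := fun n hn =>
    huniq n ⟨hn.1, by linarith [hn.2]⟩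
  have hsecond : ∀ n : ℤ, x - n ∈ Ico (a + k + ℓ) (a + k + 1) → n = N - k := fun n hn => by
    have := huniq (n + k) (by push_cast; constructor <;> linarith [hn.1, hn.2])
    omega
  refine ⟨if x - N < a + ℓ then N else N - k, ?_, fun n hn => ?_⟩
  · split_ifs with hlt
    · exact Or.inl ⟨hN.1, hlt⟩
    · right; push_cast; constructor <;> linarith [hN.1, hN.2]
  · rcases hn with hn | hn
    · obtain rfl := hfirst n hn
      rw [if_pos hn.2]
    · obtain rfl := hsecond n hn
      have : ¬ x - N < a + ℓ := by push_cast at hn; linarith [hn.1]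
      rw [if_neg this]

lemma ae_tsum_indicator_sub_int_congr {A B : Set ℝ} (h : A =ᵐ[volume] B) :
    ∀ᵐ x : ℝ, ∑' n : ℤ, A.indicator (fun _ => (1 : ℝ)) (x - n)
      = ∑' n : ℤ, B.indicator (fun _ => (1 : ℝ)) (x - n) := by
  have htranslate : ∀ n : ℤ, ∀ᵐ x : ℝ,
      A.indicator (fun _ => (1 : ℝ)) (x - n) = B.indicator (fun _ => (1 : ℝ)) (x - n) :=
    fun n => (measurePreserving_sub_right volume (n : ℝ)).quasiMeasurePreserving.ae_eq_comp
      (indicator_ae_eq_of_ae_eq_set h)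
  filter_upwards [ae_all_iff.mpr htranslate] with x hx
  exact tsum_congr hx

lemma ae_tsum_indicator_sub_int_Icc_union_Icc_eq_one {m₁ m₂ ℓ₁ ℓ₂ : ℝ} (h₁ : 0 ≤ ℓ₁)
    (h₂ : 0 ≤ ℓ₂) (hsum : ℓ₁ + ℓ₂ = 1) {n : ℤ} (hd : m₂ - m₁ = n + 1 / 2) :
    ∀ᵐ x : ℝ, ∑' k : ℤ,
      (Icc (m₁ - ℓ₁ / 2) (m₁ + ℓ₁ / 2) ∪ Icc (m₂ - ℓ₂ / 2) (m₂ + ℓ₂ / 2)).indicator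
        (fun _ => (1 : ℝ)) (x - k) = 1 := by
  set a := m₁ - ℓ₁ / 2 with ha
  have hA : Icc a (m₁ + ℓ₁ / 2) ∪ Icc (m₂ - ℓ₂ / 2) (m₂ + ℓ₂ / 2)
      = Icc a (a + ℓ₁) ∪ Icc (a + n + ℓ₁) (a + n + 1) := by
    congr 2 <;> linarith [ha]
  rw [hA]
  filter_upwards [ae_tsum_indicator_sub_int_congr (Ico_ae_eq_Icc.union Ico_ae_eq_Icc).symm]
    with x hx
  rw [hx]
  exact tsum_indicator_comp_eq_of_existsUnique
    (existsUnique_sub_int_mem_Ico_union_Ico a x h₁ (by linarith) n) 1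

end

theorem two_intervals_tile_of_ft_vanishes_at_one_general
    (ℓ₁ ℓ₂ m₁ m₂ : ℝ) (h₁ : 0 < ℓ₁) (h₂ : 0 < ℓ₂)
    (hsum : ℓ₁ + ℓ₂ = 1)
    (hdisj : Disjoint (Set.Icc (m₁ - ℓ₁ / 2) (m₁ + ℓ₁ / 2))
      (Set.Icc (m₂ - ℓ₂ / 2) (m₂ + ℓ₂ / 2)))
    (hzero : ftInd1 (Set.Icc (m₁ - ℓ₁ / 2) (m₁ + ℓ₁ / 2) ∪
      Set.Icc (m₂ - ℓ₂ / 2) (m₂ + ℓ₂ / 2)) 1 = 0) :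
    (∃ k : ℕ, 0 < k ∧ |m₁ - m₂| = (k : ℝ) + 1 / 2) ∧
      ∀ᵐ x : ℝ, (∑' n : ℤ,
        (Set.Icc (m₁ - ℓ₁ / 2) (m₁ + ℓ₁ / 2) ∪
          Set.Icc (m₂ - ℓ₂ / 2) (m₂ + ℓ₂ / 2)).indicator
            (fun _ => (1 : ℝ)) (x - (n : ℝ))) = 1 := by
  have hsin : 0 < Real.sin (π * ℓ₁) :=
    Real.sin_pos_of_pos_of_lt_pi (by positivity) (mul_lt_of_lt_one_right pi_pos (by linarith))
  rw [ftInd1_Icc_union_Icc_one h₁.le h₂.le hsum hdisj, mul_eq_zero, Complex.ofReal_eq_zero]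
    at hzero
  obtain ⟨n, hn⟩ := exists_int_sub_eq_add_half_of_exp_add_exp_eq_zero
    (hzero.resolve_right (div_pos hsin pi_pos).ne')
  refine ⟨?_, ae_tsum_indicator_sub_int_Icc_union_Icc_eq_one h₁.le h₂.le hsum hn⟩
  have hsep := add_div_two_lt_abs_sub_of_disjoint_Icc h₁.le h₂.le hdisj
  rw [hsum, abs_sub_comm, hn] at hsep
  rw [abs_sub_comm, hn]
  exact exists_pos_nat_abs_int_add_half_eq hsep

theorem two_intervals_tile_of_ft_vanishes_at_one
    (ℓ₁ ℓ₂ m₁ m₂ : ℝ) (h₁ : 0 < ℓ₁) (h₂ : 0 < ℓ₂)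
    (hsum : ℓ₁ + ℓ₂ = 1) (hne : ℓ₁ ≠ ℓ₂)
    (hdisj : Disjoint (Set.Icc (m₁ - ℓ₁ / 2) (m₁ + ℓ₁ / 2))
      (Set.Icc (m₂ - ℓ₂ / 2) (m₂ + ℓ₂ / 2)))
    (hzero : ftInd1 (Set.Icc (m₁ - ℓ₁ / 2) (m₁ + ℓ₁ / 2) ∪
      Set.Icc (m₂ - ℓ₂ / 2) (m₂ + ℓ₂ / 2)) 1 = 0) :
    (∃ k : ℕ, 0 < k ∧ |m₁ - m₂| = (k : ℝ) + 1 / 2) ∧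
      ∀ᵐ x : ℝ, (∑' n : ℤ,
        (Set.Icc (m₁ - ℓ₁ / 2) (m₁ + ℓ₁ / 2) ∪
          Set.Icc (m₂ - ℓ₂ / 2) (m₂ + ℓ₂ / 2)).indicator
            (fun _ => (1 : ℝ)) (x - (n : ℝ))) = 1 :=
  two_intervals_tile_of_ft_vanishes_at_one_general ℓ₁ ℓ₂ m₁ m₂ h₁ h₂ hsum hdisj hzero
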